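/- arXiv:2106.03056 — 3 statements merged into one kernel-verified Lean document; each statement's English description precedes it below -/
import Mathlib

section
/- Let M >= 2 and N in {1,...,M}. Let Omega be a uniformly random subset of {1,...,M} of size N, and for vectors v_1,...,v_M in R^d define C_m(v_m) = (M/N) * v_m if m is in Omega and 0 otherwise. Then E[ || sum_{m=1}^M (C_m(v_m) - v_m) ||^2 ] = (M/N) * ((M-N)/(M-1)) * sum_{m=1}^M ||v_m||^2 - ((M-N)/(N(M-1))) * || sum_{m=1}^M v_m ||^2. -/
/-!
Write the error vector as `∑ m, a_S m • v m` with `a_S m = (M/N)·[m ∈ S] - 1`. Summed over all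
`N`-subsets `S`, `‖·‖²` becomes `∑ m n, (∑ S, a_S m * a_S n) ⟪v m, v n⟫`, and the coefficient
only depends on whether `m = n`: it is computed from the number of `N`-subsets containing a
given `k`-set, which is `C(M, N) · N^{(k)} / M^{(k)}` in falling factorials.
-/

open Finset

theorem Finset.card_filter_powersetCard_subset_mul_descFactorial {α : Type*} [DecidableEq α]
    {s t : Finset α} (n : ℕ) (hst : s ⊆ t) :
    #{u ∈ t.powersetCard n | s ⊆ u} * (#t).descFactorial #s =
      (#t).choose n * n.descFactorial #s := by
  by_cases hsn : #s ≤ n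
  · rw [card_filter_powersetCard_subset s t n hst hsn, Nat.descFactorial_eq_factorial_mul_choose,
      Nat.descFactorial_eq_factorial_mul_choose]
    calc _ = (#s).factorial * ((#t).choose #s * (#t - #s).choose (n - #s)) := by ring
      _ = _ := by rw [← Nat.choose_mul hsn]; ring
  · have hempty : {u ∈ t.powersetCard n | s ⊆ u} = ∅ := by
      refine filter_false_of_mem fun u hu hsu => hsn ?_
      exact (mem_powersetCard.1 hu).2 ▸ card_le_card hsu
    rw [hempty, Nat.descFactorial_eq_zero_iff_lt.2 (not_le.1 hsn)]
    simp

section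
variable {ι : Type*} [Fintype ι] [DecidableEq ι]

theorem card_filter_mem_powersetCard_univ_mul (N : ℕ) (m : ι) :
    (#{S ∈ powersetCard N univ | m ∈ S} : ℝ) * Fintype.card ι =
      (Fintype.card ι).choose N * N := by
  have h := card_filter_powersetCard_subset_mul_descFactorial N (subset_univ {m})
  simp only [singleton_subset_iff, card_singleton, Nat.descFactorial_one, card_univ] at h
  exact_mod_cast h

theorem card_filter_mem_and_mem_powersetCard_univ_mul (N : ℕ) {m n : ι} (hmn : m ≠ n) :
    (#{S ∈ powersetCard N univ | m ∈ S ∧ n ∈ S} : ℝ) * (Fintype.card ι * (Fintype.card ι - 1)) =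
      (Fintype.card ι).choose N * (N * (N - 1)) := by
  have h := card_filter_powersetCard_subset_mul_descFactorial N (subset_univ {m, n})
  simp only [insert_subset_iff, singleton_subset_iff, card_pair hmn, card_univ] at h
  rw [← Nat.cast_descFactorial_two, ← Nat.cast_descFactorial_two]
  exact_mod_cast h

theorem sum_powersetCard_univ_ite_sub_one_mul (N : ℕ) (hN : N ≠ 0)
    (hM : (Fintype.card ι : ℝ) ≠ 1) (m n : ι) :
    ∑ S ∈ powersetCard N univ,
        ((if m ∈ S then (Fintype.card ι : ℝ) / N else 0) - 1) *
          ((if n ∈ S then (Fintype.card ι : ℝ) / N else 0) - 1) =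
      -((Fintype.card ι).choose N *
          (((Fintype.card ι : ℝ) - N) / (N * ((Fintype.card ι : ℝ) - 1)))) +
        if m = n then
          (Fintype.card ι).choose N *
            ((Fintype.card ι : ℝ) / N * (((Fintype.card ι : ℝ) - N) / ((Fintype.card ι : ℝ) - 1)))
        else 0 := by
  have : Nonempty ι := ⟨m⟩
  have hM0 : (Fintype.card ι : ℝ) ≠ 0 := Nat.cast_ne_zero.2 Fintype.card_ne_zero
  have hM1 : (Fintype.card ι : ℝ) - 1 ≠ 0 := sub_ne_zero.2 hM
  have hN0 : (N : ℝ) ≠ 0 := Nat.cast_ne_zero.2 hN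
  have count (k : ι) := eq_div_of_mul_eq hM0 (card_filter_mem_powersetCard_univ_mul N k)
  set c : ℝ := (Fintype.card ι : ℝ) / N with hc
  have expand (S : Finset ι) :
      ((if m ∈ S then c else 0) - 1) * ((if n ∈ S then c else 0) - 1) =
        c ^ 2 * (if m ∈ S ∧ n ∈ S then 1 else 0) - c * (if m ∈ S then 1 else 0) -
          c * (if n ∈ S then 1 else 0) + 1 := by
    by_cases hm : m ∈ S <;> by_cases hn : n ∈ S <;> simp [hm, hn] <;> ring
  simp_rw [expand, sum_add_distrib, sum_sub_distrib, ← mul_sum, sum_boole, sum_const,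
    card_powersetCard, card_univ, nsmul_eq_mul, mul_one, count]
  rw [hc]
  rcases eq_or_ne m n with rfl | hmn
  · simp only [and_self, if_true, count]
    field_simp
    ring
  · rw [if_neg hmn, eq_div_of_mul_eq (mul_ne_zero hM0 hM1)
      (card_filter_mem_and_mem_powersetCard_univ_mul N hmn)]
    field_simp
    ring

end

section
variable {ι E : Type*} [Fintype ι] [NormedAddCommGroup E] [InnerProductSpace ℝ E]

theorem sum_norm_sum_smul_sq {β : Type*} (𝒜 : Finset β) (a : β → ι → ℝ) (v : ι → E) :
    ∑ S ∈ 𝒜, ‖∑ m, a S m • v m‖ ^ 2 =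
      ∑ m, ∑ n, (∑ S ∈ 𝒜, a S m * a S n) * inner ℝ (v m) (v n) := by
  simp_rw [← real_inner_self_eq_norm_sq, sum_inner, inner_sum, real_inner_smul_left,
    real_inner_smul_right, sum_mul, ← mul_assoc]
  rw [sum_comm]
  exact sum_congr rfl fun _ _ => sum_comm

theorem sum_sum_add_ite_mul_inner [DecidableEq ι] (α β : ℝ) (v : ι → E) :
    ∑ m, ∑ n, (α + if m = n then β else 0) * inner ℝ (v m) (v n) =
      α * ‖∑ m, v m‖ ^ 2 + β * ∑ m, ‖v m‖ ^ 2 := by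
  simp_rw [add_mul, sum_add_distrib, ite_mul, zero_mul, sum_ite_eq, mem_univ, if_true,
    real_inner_self_eq_norm_sq, ← mul_sum, ← real_inner_self_eq_norm_sq, sum_inner, inner_sum]

end

theorem stmt2 (d M N : ℕ) (hM : 2 ≤ M) (hN1 : 1 ≤ N) (hNM : N ≤ M)
    (v : Fin M → EuclideanSpace ℝ (Fin d)) :
    ((Finset.powersetCard N (Finset.univ : Finset (Fin M))).card : ℝ)⁻¹ *
        ∑ S ∈ Finset.powersetCard N (Finset.univ : Finset (Fin M)),
          ‖∑ m, ((if m ∈ S then ((M : ℝ) / (N : ℝ)) • v m else 0) - v m)‖ ^ 2 =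
      ((M : ℝ) / (N : ℝ)) * (((M : ℝ) - (N : ℝ)) / ((M : ℝ) - 1)) * ∑ m, ‖v m‖ ^ 2 -
        (((M : ℝ) - (N : ℝ)) / ((N : ℝ) * ((M : ℝ) - 1))) * ‖∑ m, v m‖ ^ 2 := by
  have hK : (M.choose N : ℝ) ≠ 0 := Nat.cast_ne_zero.2 (Nat.choose_pos hNM).ne'
  have hM1 : (Fintype.card (Fin M) : ℝ) ≠ 1 := by
    rw [Fintype.card_fin]; exact_mod_cast (by omega : M ≠ 1)
  have hsummand (S : Finset (Fin M)) (m : Fin M) :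
      (if m ∈ S then ((M : ℝ) / N) • v m else 0) - v m =
        ((if m ∈ S then (M : ℝ) / N else 0) - 1) • v m := by
    rw [sub_smul, ite_smul, zero_smul, one_smul]
  have cov := sum_powersetCard_univ_ite_sub_one_mul N (by omega) hM1
  simp only [Fintype.card_fin] at cov
  simp_rw [hsummand, sum_norm_sum_smul_sq, cov, sum_sum_add_ite_mul_inner, card_powersetCard,
    card_univ, Fintype.card_fin]
  rw [inv_mul_eq_iff_eq_mul₀ hK]
  ring
end

section
/- Let R be a random vector in R^d with E[R] = u and E[||R - u||^2] <= omega_R * ||u||^2, where u = x_tilde - x for fixed points x, x_tilde in R^d, and let x_star in R^d. Set x_plus = x + rho * R with rho = 1/(1 + omega_R). Then E[ ||x_plus - x_star||^2 ] <= (omega_R/(1 + omega_R)) * ||x - x_star||^2 + (1/(1 + omega_R)) * ||x_tilde - x_star||^2. -/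
/-! With `ρ = 1 / (1 + ω)`, the point `x + ρ • u` is the convex combination `(1 - ρ) • x + ρ • x̃`,
and `x + ρ • R` deviates from it by the centred vector `ρ • (R - u)`. Since the cross term has mean
zero, the expected squared distance to `x⋆` is the squared distance of the convex combination plus
`ρ² E‖R - u‖² ≤ ρ² ω ‖u‖² = ρ (1 - ρ) ‖u‖²`, which exactly cancels the strong-convexity defect
`-ρ (1 - ρ) ‖x - x̃‖²` of the squared norm. -/

open MeasureTheory

section InnerProductSpace

variable {E : Type*} [NormedAddCommGroup E] [InnerProductSpace ℝ E]

theorem norm_one_sub_smul_add_smul_sq (x y : E) (t : ℝ) :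
    ‖(1 - t) • x + t • y‖ ^ 2 = (1 - t) * ‖x‖ ^ 2 + t * ‖y‖ ^ 2 - t * (1 - t) * ‖x - y‖ ^ 2 := by
  rw [norm_add_sq_real, norm_sub_sq_real, norm_smul, norm_smul, real_inner_smul_left,
    real_inner_smul_right, mul_pow, mul_pow, Real.norm_eq_abs, Real.norm_eq_abs, sq_abs, sq_abs]
  ring

variable [CompleteSpace E] {Ω : Type*} [MeasurableSpace Ω] {μ : Measure Ω}

theorem integral_norm_add_sq_of_integral_eq_zero [IsProbabilityMeasure μ] (c : E) {X : Ω → E}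
    (hX : Integrable X μ) (hX_mean : ∫ a, X a ∂μ = 0)
    (hX_sq : Integrable (fun a => ‖X a‖ ^ 2) μ) :
    ∫ a, ‖c + X a‖ ^ 2 ∂μ = ‖c‖ ^ 2 + ∫ a, ‖X a‖ ^ 2 ∂μ := by
  have h_cross : Integrable (fun a => 2 * inner ℝ c (X a)) μ := (hX.const_inner c).const_mul 2
  have h_cross_mean : ∫ a, 2 * inner ℝ c (X a) ∂μ = 0 := by
    rw [integral_const_mul, integral_inner hX, hX_mean, inner_zero_right, mul_zero]
  have h_affine : Integrable (fun a => ‖c‖ ^ 2 + 2 * inner ℝ c (X a)) μ :=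
    (integrable_const _).add h_cross
  simp_rw [norm_add_sq_real]
  rw [integral_add h_affine hX_sq,
    integral_add (integrable_const _) h_cross, h_cross_mean, integral_const]
  simp

end InnerProductSpace

theorem stmt9_general {d : ℕ} {Ω : Type*} [MeasurableSpace Ω] (μ : Measure Ω)
    [IsProbabilityMeasure μ]
    (x xtilde xstar : EuclideanSpace ℝ (Fin d))
    (R : Ω → EuclideanSpace ℝ (Fin d)) (ωR ρ : ℝ) (hωR : 0 ≤ ωR)
    (hρ : ρ = 1 / (1 + ωR))
    (hRint : Integrable R μ)
    (hmean : ∫ a, R a ∂μ = xtilde - x)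
    (hRsq : Integrable (fun a => ‖R a - (xtilde - x)‖ ^ 2) μ)
    (hvar : ∫ a, ‖R a - (xtilde - x)‖ ^ 2 ∂μ ≤ ωR * ‖xtilde - x‖ ^ 2) :
    ∫ a, ‖x + ρ • R a - xstar‖ ^ 2 ∂μ ≤
      (ωR / (1 + ωR)) * ‖x - xstar‖ ^ 2 + (1 / (1 + ωR)) * ‖xtilde - xstar‖ ^ 2 := by
  set u := xtilde - x
  set c := (1 - ρ) • (x - xstar) + ρ • (xtilde - xstar)
  have h_pos : 0 < 1 + ωR := by linarith
  have hρω : ρ * ωR = 1 - ρ := by rw [hρ]; field_simp; ring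
  have h_split : ∀ a, x + ρ • R a - xstar = c + ρ • (R a - u) := fun a => by module
  have h_dev : Integrable (fun a => ρ • (R a - u)) μ := (hRint.sub (integrable_const u)).smul ρ
  have h_dev_mean : ∫ a, ρ • (R a - u) ∂μ = 0 := by
    rw [integral_smul, integral_sub hRint (integrable_const u), hmean, integral_const]
    simp
  have h_dev_sq : ∀ a, ‖ρ • (R a - u)‖ ^ 2 = ρ ^ 2 * ‖R a - u‖ ^ 2 := fun a => by
    rw [norm_smul, mul_pow, Real.norm_eq_abs, sq_abs]
  have h_expect : ∫ a, ‖x + ρ • R a - xstar‖ ^ 2 ∂μ = ‖c‖ ^ 2 + ρ ^ 2 * ∫ a, ‖R a - u‖ ^ 2 ∂μ := by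
    simp_rw [h_split]
    rw [integral_norm_add_sq_of_integral_eq_zero c h_dev h_dev_mean
      (by simpa only [h_dev_sq] using hRsq.const_mul (ρ ^ 2))]
    simp only [h_dev_sq, integral_const_mul]
  have h_c : ‖c‖ ^ 2 = (1 - ρ) * ‖x - xstar‖ ^ 2 + ρ * ‖xtilde - xstar‖ ^ 2
      - ρ * (1 - ρ) * ‖u‖ ^ 2 := by
    rw [norm_one_sub_smul_add_smul_sq, sub_sub_sub_cancel_right, norm_sub_rev x xtilde]
  have h_var : ρ ^ 2 * ∫ a, ‖R a - u‖ ^ 2 ∂μ ≤ ρ * (1 - ρ) * ‖u‖ ^ 2 :=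
    calc ρ ^ 2 * ∫ a, ‖R a - u‖ ^ 2 ∂μ ≤ ρ ^ 2 * (ωR * ‖u‖ ^ 2) := by gcongr
      _ = ρ * (1 - ρ) * ‖u‖ ^ 2 := by rw [← hρω]; ring
  have h_coeff : ωR / (1 + ωR) = 1 - ρ := by rw [hρ]; field_simp; ring
  rw [h_expect, h_c, h_coeff, ← hρ]
  linarith

theorem stmt9 {d : ℕ} {Ω : Type*} [MeasurableSpace Ω] (μ : Measure Ω)
    [IsProbabilityMeasure μ]
    (x xtilde xstar : EuclideanSpace ℝ (Fin d))
    (R : Ω → EuclideanSpace ℝ (Fin d)) (ωR ρ : ℝ) (hωR : 0 ≤ ωR)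
    (hρ : ρ = 1 / (1 + ωR))
    (hRint : Integrable R μ)
    (hmean : ∫ a, R a ∂μ = xtilde - x)
    (hRsq : Integrable (fun a => ‖R a - (xtilde - x)‖ ^ 2) μ)
    (hvar : ∫ a, ‖R a - (xtilde - x)‖ ^ 2 ∂μ ≤ ωR * ‖xtilde - x‖ ^ 2)
    (hplussq : Integrable (fun a => ‖x + ρ • R a - xstar‖ ^ 2) μ) :
    ∫ a, ‖x + ρ • R a - xstar‖ ^ 2 ∂μ ≤
      (ωR / (1 + ωR)) * ‖x - xstar‖ ^ 2 + (1 / (1 + ωR)) * ‖xtilde - xstar‖ ^ 2 :=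
  stmt9_general μ x xtilde xstar R ωR ρ hωR hρ hRint hmean hRsq hvar
end

section
/- Let rho in (0,1], omega_R' >= 0 with rho <= 1/(1 + omega_R'). Then for all vectors u, w in R^d and any random vector R with E[R] = u, E[||R - u||^2] <= omega_R' * ||u||^2: E[||w + rho*R||^2] <= ((1-rho)^2 + rho^2*omega_R') * ||w||^2 + rho^2*(1 + omega_R') * ||w + u||^2 + 2*rho*(1 - rho*(1 + omega_R')) * <w, w + u> holds, where the right-hand side, for rho = 1/(1 + omega_R'), simplifies to (omega_R'/(1+omega_R')) * ||w||^2 + (1/(1+omega_R')) * ||w + u||^2. -/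
open MeasureTheory RealInnerProductSpace

theorem stmt17 {d : ℕ} {Ω : Type*} [MeasurableSpace Ω] (μ : Measure Ω)
    [IsProbabilityMeasure μ] (ρ ωR' : ℝ) (hρ0 : 0 < ρ) (hρ1 : ρ ≤ 1)
    (hωR' : 0 ≤ ωR') (hρ : ρ ≤ 1 / (1 + ωR'))
    (w u : EuclideanSpace ℝ (Fin d)) (R : Ω → EuclideanSpace ℝ (Fin d))
    (hRint : Integrable R μ)
    (hmean : ∫ a, R a ∂μ = u)
    (hRsq : Integrable (fun a => ‖R a - u‖ ^ 2) μ)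
    (hvar : ∫ a, ‖R a - u‖ ^ 2 ∂μ ≤ ωR' * ‖u‖ ^ 2)
    (hsq : Integrable (fun a => ‖w + ρ • R a‖ ^ 2) μ) :
    (∫ a, ‖w + ρ • R a‖ ^ 2 ∂μ ≤
        ((1 - ρ) ^ 2 + ρ ^ 2 * ωR') * ‖w‖ ^ 2 + ρ ^ 2 * (1 + ωR') * ‖w + u‖ ^ 2 +
          2 * ρ * (1 - ρ * (1 + ωR')) * ⟪w, w + u⟫) ∧
      (ρ = 1 / (1 + ωR') →
        ((1 - ρ) ^ 2 + ρ ^ 2 * ωR') * ‖w‖ ^ 2 + ρ ^ 2 * (1 + ωR') * ‖w + u‖ ^ 2 +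
            2 * ρ * (1 - ρ * (1 + ωR')) * ⟪w, w + u⟫ =
          (ωR' / (1 + ωR')) * ‖w‖ ^ 2 + (1 / (1 + ωR')) * ‖w + u‖ ^ 2) := by
  set v : EuclideanSpace ℝ (Fin d) := w + ρ • u with hv
  have hptw : ∀ a, ‖w + ρ • R a‖ ^ 2
      = ‖v‖ ^ 2 + 2 * (ρ * ⟪v, R a - u⟫) + ρ ^ 2 * ‖R a - u‖ ^ 2 := by
    intro a
    have h1 : w + ρ • R a = v + ρ • (R a - u) := by
      rw [hv, smul_sub]; abel
    rw [h1, @norm_add_sq_real, real_inner_smul_right, norm_smul]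
    simp [mul_pow, sq_abs]
  have hi2 : Integrable (fun a => 2 * (ρ * ⟪v, R a - u⟫)) μ :=
    (((hRint.sub (integrable_const u)).const_inner v).const_mul ρ).const_mul 2
  have hi3 : Integrable (fun a => ρ ^ 2 * ‖R a - u‖ ^ 2) μ := hRsq.const_mul _
  have hint : ∫ a, ‖w + ρ • R a‖ ^ 2 ∂μ
      = ‖v‖ ^ 2 + ρ ^ 2 * ∫ a, ‖R a - u‖ ^ 2 ∂μ := by
    calc ∫ a, ‖w + ρ • R a‖ ^ 2 ∂μ
        = ∫ a, (‖v‖ ^ 2 + 2 * (ρ * ⟪v, R a - u⟫) + ρ ^ 2 * ‖R a - u‖ ^ 2) ∂μ := by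
          exact integral_congr_ae (Filter.Eventually.of_forall hptw)
      _ = ∫ a, (‖v‖ ^ 2 + 2 * (ρ * ⟪v, R a - u⟫)) ∂μ + ∫ a, ρ ^ 2 * ‖R a - u‖ ^ 2 ∂μ :=
          integral_add ((integrable_const _).add hi2) hi3
      _ = (∫ a, (‖v‖ ^ 2 : ℝ) ∂μ) + (∫ a, 2 * (ρ * ⟪v, R a - u⟫) ∂μ)
            + ρ ^ 2 * ∫ a, ‖R a - u‖ ^ 2 ∂μ := by
          rw [integral_add (integrable_const _) hi2]
          simp [integral_const_mul]
      _ = ‖v‖ ^ 2 + ρ ^ 2 * ∫ a, ‖R a - u‖ ^ 2 ∂μ := by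
          have hz : ∫ a, 2 * (ρ * ⟪v, R a - u⟫) ∂μ = 0 := by
            have hzint : Integrable (fun a => R a - u) μ := hRint.sub (integrable_const u)
            rw [integral_const_mul, integral_const_mul, integral_inner hzint,
              integral_sub hRint (integrable_const u), hmean]
            simp
          rw [hz]; simp
  have hA : ‖v‖ ^ 2 = ‖w‖ ^ 2 + 2 * (ρ * ⟪w, u⟫) + ρ ^ 2 * ‖u‖ ^ 2 := by
    rw [hv, @norm_add_sq_real, real_inner_smul_right, norm_smul]
    simp [mul_pow, sq_abs]
  have hB : ‖w + u‖ ^ 2 = ‖w‖ ^ 2 + 2 * ⟪w, u⟫ + ‖u‖ ^ 2 := by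
    rw [@norm_add_sq_real]
  have hC : ⟪w, w + u⟫ = ‖w‖ ^ 2 + ⟪w, u⟫ := by
    rw [inner_add_right, real_inner_self_eq_norm_sq]
  constructor
  · rw [hint]
    have hle : ρ ^ 2 * ∫ a, ‖R a - u‖ ^ 2 ∂μ ≤ ρ ^ 2 * (ωR' * ‖u‖ ^ 2) :=
      mul_le_mul_of_nonneg_left hvar (sq_nonneg ρ)
    have heq : ((1 - ρ) ^ 2 + ρ ^ 2 * ωR') * ‖w‖ ^ 2 + ρ ^ 2 * (1 + ωR') * ‖w + u‖ ^ 2 +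
          2 * ρ * (1 - ρ * (1 + ωR')) * ⟪w, w + u⟫
        = ‖v‖ ^ 2 + ρ ^ 2 * (ωR' * ‖u‖ ^ 2) := by
      rw [hA, hB, hC]; ring
    linarith
  · intro hρeq
    have hpos : (1 + ωR') ≠ 0 := by positivity
    rw [hB, hC, hρeq]
    field_simp
    ring
end
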